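/- arXiv:1805.01587 — 8 statements merged into one kernel-verified Lean document; each statement's English description precedes it below -/
import Mathlib

section
/- Let m : [0,∞) → ℝ be continuous with m(t) > 0 for every t ≥ 0, and suppose that the map t ↦ m(t)/t is strictly decreasing on (0,∞). Then the function L(t) := (1/2)M(t) − (1/4)m(t)t is strictly increasing on [0,∞); in particular L(t) > L(0) = 0 for every t > 0. -/
open intervalIntegral Set

/-!
For `0 ≤ s < t` put `c = m t / t`. Since `m τ / τ` strictly decreases, `m τ > c τ` on `(s, t)` and
`m s · s ≥ c s²`, while `m t · t = c t²`. Hence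
`M t - M s > c (t² - s²) / 2 ≥ (m t · t - m s · s) / 2`, that is, `L t > L s`.
-/

theorem mul_sq_sub_sq_div_two_lt_integral {f : ℝ → ℝ} {s t c : ℝ} (hst : s < t)
    (hf : IntervalIntegrable f MeasureTheory.volume s t) (hlt : ∀ τ ∈ Ioo s t, c * τ < f τ) :
    c * ((t ^ 2 - s ^ 2) / 2) < ∫ τ in s..t, f τ := by
  have hlin : IntervalIntegrable (fun τ => c * τ) MeasureTheory.volume s t :=
    (continuous_const.mul continuous_id).intervalIntegrable s t
  have hpos := intervalIntegral_pos_of_pos_on (hf.sub hlin) (fun τ hτ => sub_pos.2 (hlt τ hτ)) hst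
  rw [integral_sub hf hlin, integral_const_mul, integral_id] at hpos
  linarith

theorem strictMonoOn_half_integral_sub_quarter_mul_self {m : ℝ → ℝ}
    (hm_cont : ContinuousOn m (Ici 0)) (hm_dec : StrictAntiOn (fun t => m t / t) (Ioi 0)) :
    StrictMonoOn (fun t => (1 / 2) * (∫ τ in (0 : ℝ)..t, m τ) - (1 / 4) * m t * t) (Ici 0) := by
  intro s (hs : 0 ≤ s) t (ht : 0 ≤ t) hst
  have ht0 : 0 < t := hs.trans_lt hst
  set c := m t / t
  have hint : ∀ a b, 0 ≤ a → a ≤ b → IntervalIntegrable m MeasureTheory.volume a b :=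
    fun a b ha hab =>
      (hm_cont.mono (Icc_subset_Ici_self.trans (Ici_subset_Ici.2 ha))).intervalIntegrable_of_Icc hab
  have hbelow : ∀ τ ∈ Ioo s t, c * τ < m τ := fun τ hτ =>
    (lt_div_iff₀ (hs.trans_lt hτ.1)).1 (hm_dec (hs.trans_lt hτ.1) ht0 hτ.2)
  have hintegral := mul_sq_sub_sq_div_two_lt_integral hst (hint s t hs hst.le) hbelow
  have hsplit : (∫ τ in (0 : ℝ)..t, m τ) - ∫ τ in (0 : ℝ)..s, m τ = ∫ τ in s..t, m τ :=
    integral_interval_sub_left (hint 0 t le_rfl ht) (hint 0 s le_rfl hs)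
  have hright : m t * t = c * t ^ 2 := by rw [sq, ← mul_assoc, div_mul_cancel₀ _ ht0.ne']
  have hleft : c * s ^ 2 ≤ m s * s := by
    rcases hs.eq_or_lt with rfl | hs0
    · simp
    · have hcs : c * s < m s := (lt_div_iff₀ hs0).1 (hm_dec hs0 ht0 hst)
      nlinarith
  linarith

theorem stmt_0_general (m : ℝ → ℝ)
    (hm_cont : ContinuousOn m (Set.Ici 0))
    (hm_dec : StrictAntiOn (fun t => m t / t) (Set.Ioi (0 : ℝ)))
    (M L : ℝ → ℝ)
    (hM : ∀ t : ℝ, M t = ∫ τ in (0:ℝ)..t, m τ)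
    (hL : ∀ t : ℝ, L t = (1/2) * M t - (1/4) * m t * t) :
    StrictMonoOn L (Set.Ici 0) ∧ L 0 = 0 ∧ ∀ t : ℝ, 0 < t → 0 < L t := by
  have hL_eq : L = fun t => (1 / 2) * (∫ τ in (0 : ℝ)..t, m τ) - (1 / 4) * m t * t := by
    funext t
    rw [hL, hM]
  have hmono : StrictMonoOn L (Ici 0) :=
    hL_eq ▸ strictMonoOn_half_integral_sub_quarter_mul_self hm_cont hm_dec
  have hL0 : L 0 = 0 := by simp [hL_eq]
  refine ⟨hmono, hL0, fun t ht => ?_⟩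
  simpa [hL0] using hmono self_mem_Ici ht.le ht

theorem stmt_0 (m : ℝ → ℝ)
    (hm_cont : ContinuousOn m (Set.Ici 0))
    (hm_pos : ∀ t : ℝ, 0 ≤ t → 0 < m t)
    (hm_dec : StrictAntiOn (fun t => m t / t) (Set.Ioi (0 : ℝ)))
    (M L : ℝ → ℝ)
    (hM : ∀ t : ℝ, M t = ∫ τ in (0:ℝ)..t, m τ)
    (hL : ∀ t : ℝ, L t = (1/2) * M t - (1/4) * m t * t) :
    StrictMonoOn L (Set.Ici 0) ∧ L 0 = 0 ∧ ∀ t : ℝ, 0 < t → 0 < L t :=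
  stmt_0_general m hm_cont hm_dec M L hM hL
end

section
/- Let f : ℝ → ℝ be continuous with f(s) = 0 for every s ≤ 0, and suppose that the map s ↦ f(s)/s³ is positive and nondecreasing on (0,∞). Then the function G(s) := s f(s) − 4 F(s) is nondecreasing on [0,∞); in particular G(s) ≥ G(0) = 0 for every s > 0. -/
/-!
Let `c = f b / b ^ p`. Monotonicity of `f τ / τ ^ p` gives `f ≤ c τ ^ p` on `(0, b]`, so for
`0 ≤ a ≤ b` the integral of `f` over `[a, b]` is at most `c (b ^ (p+1) - a ^ (p+1)) / (p+1)`, while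
`b f b = c b ^ (p+1)` and `a f a ≤ c a ^ (p+1)`. These three facts combine to
`G a ≤ G b` for `G s = s f s - (p+1) ∫₀ˢ f`; the comparison function `c τ ^ p` is exactly the
one for which `G` is constant.
-/

open Set MeasureTheory intervalIntegral

section MonotoneDivPow

variable {f : ℝ → ℝ} {p : ℕ}

lemma le_div_pow_mul_pow_of_monotoneOn (hmono : MonotoneOn (fun s => f s / s ^ p) (Ioi 0))
    {τ b : ℝ} (hτ : 0 < τ) (hτb : τ ≤ b) : f τ ≤ f b / b ^ p * τ ^ p := by
  have hratio : f τ / τ ^ p ≤ f b / b ^ p := hmono hτ (hτ.trans_le hτb) hτb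
  rwa [div_le_iff₀ (by positivity)] at hratio

lemma mul_le_div_pow_mul_pow_succ_of_monotoneOn
    (hmono : MonotoneOn (fun s => f s / s ^ p) (Ioi 0))
    {a b : ℝ} (ha : 0 ≤ a) (hab : a ≤ b) : a * f a ≤ f b / b ^ p * a ^ (p + 1) := by
  rcases ha.eq_or_lt with rfl | ha
  · simp
  calc a * f a ≤ a * (f b / b ^ p * a ^ p) :=
        mul_le_mul_of_nonneg_left (le_div_pow_mul_pow_of_monotoneOn hmono ha hab) ha.le
    _ = f b / b ^ p * a ^ (p + 1) := by ring

lemma integral_le_of_monotoneOn_div_pow (hmono : MonotoneOn (fun s => f s / s ^ p) (Ioi 0))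
    (hf : ∀ a b, IntervalIntegrable f volume a b) {a b : ℝ} (ha : 0 ≤ a) (hab : a ≤ b) :
    ∫ τ in a..b, f τ ≤ f b / b ^ p * ((b ^ (p + 1) - a ^ (p + 1)) / (p + 1)) := by
  calc ∫ τ in a..b, f τ ≤ ∫ τ in a..b, f b / b ^ p * τ ^ p :=
        integral_mono_on_of_le_Ioo hab (hf a b)
          ((continuous_const.mul (continuous_pow p)).intervalIntegrable a b) fun τ hτ =>
          le_div_pow_mul_pow_of_monotoneOn hmono (ha.trans_lt hτ.1) hτ.2.le
    _ = f b / b ^ p * ((b ^ (p + 1) - a ^ (p + 1)) / (p + 1)) := by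
        rw [intervalIntegral.integral_const_mul, integral_pow]

theorem monotoneOn_mul_sub_integral_of_monotoneOn_div_pow
    (hmono : MonotoneOn (fun s => f s / s ^ p) (Ioi 0))
    (hf : ∀ a b, IntervalIntegrable f volume a b) :
    MonotoneOn (fun s => s * f s - (p + 1) * ∫ τ in (0 : ℝ)..s, f τ) (Ici 0) := by
  intro a ha b _ hab
  rcases hab.eq_or_lt with rfl | hlt
  · exact le_rfl
  have hb0 : 0 < b := lt_of_le_of_lt ha hlt
  have hfb : b * f b = f b / b ^ p * b ^ (p + 1) := by field_simp; ring
  have hfa := mul_le_div_pow_mul_pow_succ_of_monotoneOn hmono ha hab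
  have hint := integral_le_of_monotoneOn_div_pow hmono hf ha hab
  have hsplit : (∫ τ in (0 : ℝ)..b, f τ) - ∫ τ in (0 : ℝ)..a, f τ = ∫ τ in a..b, f τ :=
    integral_interval_sub_left (hf 0 b) (hf 0 a)
  have hp : (0 : ℝ) < p + 1 := by positivity
  rw [mul_div_assoc', le_div_iff₀ hp] at hint
  dsimp only
  linear_combination hfa + hint - hfb + (p + 1) * hsplit

end MonotoneDivPow

theorem stmt_1_general (f : ℝ → ℝ)
    (hf_cont : Continuous f)
    (hf_mono : MonotoneOn (fun s => f s / s ^ 3) (Set.Ioi (0 : ℝ)))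
    (F G : ℝ → ℝ)
    (hF : ∀ s : ℝ, F s = ∫ τ in (0:ℝ)..s, f τ)
    (hG : ∀ s : ℝ, G s = s * f s - 4 * F s) :
    MonotoneOn G (Set.Ici 0) ∧ G 0 = 0 ∧ ∀ s : ℝ, 0 < s → 0 ≤ G s := by
  have hG_eq : G = fun s => s * f s - ((3 : ℕ) + 1) * ∫ τ in (0 : ℝ)..s, f τ := by
    ext s
    rw [hG, hF]
    norm_num
  have hmono : MonotoneOn G (Ici 0) := hG_eq ▸
    monotoneOn_mul_sub_integral_of_monotoneOn_div_pow hf_mono hf_cont.intervalIntegrable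
  have hG0 : G 0 = 0 := by simp [hG_eq]
  refine ⟨hmono, hG0, fun s hs => ?_⟩
  calc 0 = G 0 := hG0.symm
    _ ≤ G s := hmono self_mem_Ici hs.le hs.le

theorem stmt_1 (f : ℝ → ℝ)
    (hf_cont : Continuous f)
    (hf_zero : ∀ s : ℝ, s ≤ 0 → f s = 0)
    (hf_pos : ∀ s : ℝ, 0 < s → 0 < f s / s ^ 3)
    (hf_mono : MonotoneOn (fun s => f s / s ^ 3) (Set.Ioi (0 : ℝ)))
    (F G : ℝ → ℝ)
    (hF : ∀ s : ℝ, F s = ∫ τ in (0:ℝ)..s, f τ)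
    (hG : ∀ s : ℝ, G s = s * f s - 4 * F s) :
    MonotoneOn G (Set.Ici 0) ∧ G 0 = 0 ∧ ∀ s : ℝ, 0 < s → 0 ≤ G s :=
  stmt_1_general f hf_cont hf_mono F G hF hG
end

section
/- Let f : ℝ → [0,∞) be continuous with f(s) = 0 for every s ≤ 0, let α₀ > 0, and assume: (i) for every α > α₀, f(s)/e^{α s²} → 0 as s → ∞; (ii) f(s)/s → 0 as s → 0⁺. Then for every ε > 0, every α > α₀ and every q ≥ 1 there exists a constant C = C(ε,α,q) > 0 such that max{|F(s)|, |s f(s)|} ≤ ε s² + C |s|^q (e^{α s²} − 1) for all s ∈ ℝ. -/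
open Real Filter

set_option maxHeartbeats 1000000

theorem stmt_3 (f : ℝ → ℝ) (α₀ : ℝ)
    (hf_cont : Continuous f)
    (hf_nonneg : ∀ s : ℝ, 0 ≤ f s)
    (hf_zero : ∀ s : ℝ, s ≤ 0 → f s = 0)
    (hα₀ : 0 < α₀)
    (hf_crit : ∀ α : ℝ, α₀ < α →
      Tendsto (fun s => f s / Real.exp (α * s ^ 2)) atTop (nhds 0))
    (hf_origin : Tendsto (fun s => f s / s) (nhdsWithin 0 (Set.Ioi 0)) (nhds 0))
    (F : ℝ → ℝ)
    (hF : ∀ s : ℝ, F s = ∫ τ in (0:ℝ)..s, f τ) :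
    ∀ ε : ℝ, 0 < ε → ∀ α : ℝ, α₀ < α → ∀ q : ℝ, 1 ≤ q →
      ∃ C : ℝ, 0 < C ∧ ∀ s : ℝ,
        max |F s| |s * f s| ≤ ε * s ^ 2 + C * |s| ^ q * (Real.exp (α * s ^ 2) - 1) := by
  intro ε hε α hα q hq
  have hαpos : 0 < α := hα₀.trans hα
  -- small-scale bound from hf_origin
  obtain ⟨δ₀, hδ₀, hδ₀'⟩ : ∃ δ₀ > 0, ∀ τ : ℝ, 0 < τ → τ < δ₀ → f τ ≤ ε * τ := by
    have h := hf_origin.eventually_lt_const hε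
    rw [eventually_nhdsWithin_iff, Metric.eventually_nhds_iff] at h
    obtain ⟨δ₀, hδ₀, h⟩ := h
    refine ⟨δ₀, hδ₀, fun τ hτ hτ' => ?_⟩
    have h2 : f τ / τ < ε :=
      h (by simpa [Real.dist_eq, abs_of_pos hτ] using hτ') hτ
    have h3 : f τ = (f τ / τ) * τ := by field_simp
    nlinarith [hf_nonneg τ]
  set δ : ℝ := δ₀ / 2 with hδdef
  have hδ : 0 < δ := by positivity
  -- global bound f τ ≤ K exp(α τ²)
  obtain ⟨N, hN⟩ : ∃ N : ℝ, ∀ s ≥ N, f s ≤ Real.exp (α * s ^ 2) := by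
    have h := (hf_crit α hα).eventually_lt_const one_pos
    rw [eventually_atTop] at h
    obtain ⟨N, hN⟩ := h
    refine ⟨N, fun s hs => ?_⟩
    have h1 : f s / Real.exp (α * s ^ 2) < 1 := hN s hs
    have he : (0:ℝ) < Real.exp (α * s ^ 2) := Real.exp_pos _
    have h3 : f s = (f s / Real.exp (α * s ^ 2)) * Real.exp (α * s ^ 2) := by field_simp
    nlinarith [hf_nonneg s]
  obtain ⟨x₀, hx₀, hmax⟩ := isCompact_Icc.exists_isMaxOn
    (Set.nonempty_Icc.mpr (le_max_right N 0)) (hf_cont.continuousOn (s := Set.Icc 0 (max N 0)))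
  set K : ℝ := max (f x₀) 1 with hKdef
  have hK1 : (1:ℝ) ≤ K := le_max_right _ _
  have hK0 : (0:ℝ) < K := lt_of_lt_of_le one_pos hK1
  have hKB : ∀ τ : ℝ, f τ ≤ K * Real.exp (α * τ ^ 2) := by
    intro τ
    have hexp1 : (1:ℝ) ≤ Real.exp (α * τ ^ 2) := Real.one_le_exp (by positivity)
    rcases le_or_gt τ 0 with h | h
    · rw [hf_zero τ h]; positivity
    · rcases le_or_gt τ (max N 0) with h2 | h2
      · have h3 : f τ ≤ f x₀ := hmax ⟨h.le, h2⟩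
        have h4 : f x₀ ≤ K := le_max_left _ _
        nlinarith
      · have hτN : N ≤ τ := le_of_lt (lt_of_le_of_lt (le_max_left N 0) h2)
        have h3 := hN τ hτN
        nlinarith
  -- the constant
  set c : ℝ := 1 - Real.exp (-(α * δ ^ 2)) with hcdef
  have hc : 0 < c := by
    have h1 : Real.exp (-(α * δ ^ 2)) < 1 := by
      rw [Real.exp_lt_one_iff]
      have : 0 < α * δ ^ 2 := by positivity
      linarith
    simp only [hcdef]; linarith
  have hd : (0:ℝ) < c * δ ^ (q - 1) := by positivity
  set C : ℝ := max (K / (c * δ ^ (q - 1))) 1 with hCdef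
  have hC0 : (0:ℝ) < C := lt_of_lt_of_le one_pos (le_max_right _ _)
  have hCd : K ≤ C * (c * δ ^ (q - 1)) := by
    have h1 : K / (c * δ ^ (q - 1)) ≤ C := le_max_left _ _
    calc K = K / (c * δ ^ (q - 1)) * (c * δ ^ (q - 1)) := by field_simp
    _ ≤ C * (c * δ ^ (q - 1)) := mul_le_mul_of_nonneg_right h1 hd.le
  refine ⟨C, hC0, fun s => ?_⟩
  have hE1 : (1:ℝ) ≤ Real.exp (α * s ^ 2) := Real.one_le_exp (by positivity)
  have hRHS2 : 0 ≤ C * |s| ^ q * (Real.exp (α * s ^ 2) - 1) := by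
    apply mul_nonneg (by positivity); linarith
  rcases le_or_gt s 0 with hs | hs
  · -- s ≤ 0 case : everything zero
    have hF0 : F s = 0 := by
      rw [hF s]
      have : ∀ τ ∈ Set.uIcc (0:ℝ) s, f τ = (fun _ => (0:ℝ)) τ := by
        intro τ hτ
        rw [Set.uIcc_of_ge hs] at hτ
        exact hf_zero τ hτ.2
      rw [intervalIntegral.integral_congr this]
      simp
    rw [hF0, hf_zero s hs]
    simp only [abs_zero, mul_zero, max_self]
    have : 0 ≤ ε * s ^ 2 := by positivity
    linarith
  · -- s > 0
    have hFnn : 0 ≤ F s := by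
      rw [hF s]
      exact intervalIntegral.integral_nonneg hs.le (fun τ _ => hf_nonneg τ)
    have habsF : |F s| = F s := abs_of_nonneg hFnn
    have habssf : |s * f s| = s * f s := abs_of_nonneg (mul_nonneg hs.le (hf_nonneg s))
    have habss : |s| = s := abs_of_pos hs
    rw [habsF, habssf, habss]
    rw [habss] at hRHS2
    rcases le_or_gt s δ with hsδ | hsδ
    · -- small s : bound by ε s²
      have hsmall : ∀ τ : ℝ, 0 ≤ τ → τ ≤ s → f τ ≤ ε * s := by
        intro τ h0 h1
        rcases eq_or_lt_of_le h0 with rfl | h0'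
        · rw [hf_zero 0 le_rfl]; positivity
        · have : f τ ≤ ε * τ := hδ₀' τ h0' (by simp only [hδdef] at hsδ; linarith)
          nlinarith
      have hfs : s * f s ≤ ε * s ^ 2 := by
        have := hsmall s hs.le le_rfl
        nlinarith
      have hFs : F s ≤ ε * s ^ 2 := by
        rw [hF s]
        have hmono : ∫ τ in (0:ℝ)..s, f τ ≤ ∫ τ in (0:ℝ)..s, (ε * s) := by
          apply intervalIntegral.integral_mono_on hs.le
            (hf_cont.intervalIntegrable 0 s) (intervalIntegrable_const)
          intro τ hτ
          exact hsmall τ hτ.1 hτ.2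
        calc (∫ τ in (0:ℝ)..s, f τ) ≤ ∫ τ in (0:ℝ)..s, (ε * s) := hmono
        _ = (s - 0) * (ε * s) := by rw [intervalIntegral.integral_const]; simp [smul_eq_mul]
        _ = ε * s ^ 2 := by ring
      have h1 : max (F s) (s * f s) ≤ ε * s ^ 2 := max_le hFs hfs
      linarith
    · -- large s : bound by K s exp(α s²)
      set E : ℝ := Real.exp (α * s ^ 2) with hEdef
      have hEpos : 0 < E := Real.exp_pos _
      have hBig : ∀ τ : ℝ, 0 ≤ τ → τ ≤ s → f τ ≤ K * E := by
        intro τ h0 h1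
        have h2 : Real.exp (α * τ ^ 2) ≤ E := by
          apply Real.exp_le_exp.mpr
          apply mul_le_mul_of_nonneg_left (by nlinarith) hαpos.le
        have := hKB τ
        nlinarith
      have hfs : s * f s ≤ K * s * E := by
        have := hBig s hs.le le_rfl
        nlinarith
      have hFs : F s ≤ K * s * E := by
        rw [hF s]
        have hmono : ∫ τ in (0:ℝ)..s, f τ ≤ ∫ τ in (0:ℝ)..s, (K * E) := by
          apply intervalIntegral.integral_mono_on hs.le
            (hf_cont.intervalIntegrable 0 s) (intervalIntegrable_const)
          intro τ hτ
          exact hBig τ hτ.1 hτ.2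
        calc (∫ τ in (0:ℝ)..s, f τ) ≤ ∫ τ in (0:ℝ)..s, (K * E) := hmono
        _ = (s - 0) * (K * E) := by rw [intervalIntegral.integral_const]; simp [smul_eq_mul]
        _ = K * s * E := by ring
      -- key inequality : K s E ≤ C s^q (E - 1)
      have hcE : c * E ≤ E - 1 := by
        have h1 : E * Real.exp (-(α * δ ^ 2)) = Real.exp (α * s ^ 2 - α * δ ^ 2) := by
          rw [hEdef, ← Real.exp_add]; ring_nf
        have h2 : (1:ℝ) ≤ Real.exp (α * s ^ 2 - α * δ ^ 2) := by
          apply Real.one_le_exp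
          have hss : δ ^ 2 ≤ s ^ 2 := by nlinarith
          have := mul_le_mul_of_nonneg_left hss hαpos.le
          linarith
        simp only [hcdef]
        nlinarith
      have hsq : δ ^ (q - 1) * s ≤ s ^ q := by
        have h1 : δ ^ (q - 1) ≤ s ^ (q - 1) :=
          Real.rpow_le_rpow hδ.le hsδ.le (by linarith)
        have h2 : s ^ q = s ^ (q - 1) * s := by
          rw [← Real.rpow_add_one hs.ne' (q - 1), sub_add_cancel]
        rw [h2]
        exact mul_le_mul_of_nonneg_right h1 hs.le
      have hkey : K * s * E ≤ C * s ^ q * (E - 1) := by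
        have hcEnn : 0 ≤ c * E := by positivity
        have h1 : (δ ^ (q - 1) * s) * (c * E) ≤ s ^ q * (E - 1) := by
          apply mul_le_mul hsq hcE hcEnn
          positivity
        calc K * s * E = K * (s * E) := by ring
        _ ≤ (C * (c * δ ^ (q - 1))) * (s * E) := by
            apply mul_le_mul_of_nonneg_right hCd; positivity
        _ = C * ((δ ^ (q - 1) * s) * (c * E)) := by ring
        _ ≤ C * (s ^ q * (E - 1)) := mul_le_mul_of_nonneg_left h1 hC0.le
        _ = C * s ^ q * (E - 1) := by ring
      have hεnn : 0 ≤ ε * s ^ 2 := by positivity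
      have h1 : max (F s) (s * f s) ≤ K * s * E := max_le hFs hfs
      linarith
end

section
/- Let m : [0,∞) → ℝ be continuous with m₀ := inf_{t ≥ 0} m(t) > 0, suppose that the map t ↦ m(t)/t is strictly decreasing on (0,∞), and let θ₀ > 4. Then for every t ≥ 0 one has (1/2)M(t) − (1/θ₀) m(t) t ≥ ((θ₀ − 4)/(4θ₀)) m₀ t. -/
theorem stmt_6 (m : ℝ → ℝ) (m₀ θ₀ : ℝ)
    (hm_cont : ContinuousOn m (Set.Ici 0))
    (hm₀ : m₀ = sInf (m '' Set.Ici 0))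
    (hm₀_pos : 0 < m₀)
    (hm_dec : StrictAntiOn (fun t => m t / t) (Set.Ioi (0 : ℝ)))
    (hθ : 4 < θ₀)
    (M : ℝ → ℝ)
    (hM : ∀ t : ℝ, M t = ∫ τ in (0:ℝ)..t, m τ) :
    ∀ t : ℝ, 0 ≤ t →
      (1/2) * M t - (1/θ₀) * m t * t ≥ ((θ₀ - 4) / (4 * θ₀)) * m₀ * t := by
  have hθ0 : (0:ℝ) < θ₀ := by linarith
  have hbdd : BddBelow (m '' Set.Ici 0) := by
    by_contra h
    rw [Real.sInf_of_not_bddBelow h] at hm₀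
    linarith
  have hlow : ∀ t : ℝ, 0 ≤ t → m₀ ≤ m t := by
    intro t ht
    rw [hm₀]
    exact csInf_le hbdd ⟨t, ht, rfl⟩
  intro t ht
  rcases eq_or_lt_of_le ht with h0 | h0
  · rw [← h0, hM]
    simp
  · have htmem : t ∈ Set.Ioi (0:ℝ) := h0
    have hint : IntervalIntegrable m MeasureTheory.volume 0 t := by
      apply ContinuousOn.intervalIntegrable
      apply hm_cont.mono
      rw [Set.uIcc_of_le ht]
      exact Set.Icc_subset_Ici_self
    have hle : ∀ τ ∈ Set.Icc (0:ℝ) t, (m t / t) * τ ≤ m τ := by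
      intro τ hτ
      rcases eq_or_lt_of_le hτ.1 with h' | h'
      · rw [← h', mul_zero]
        linarith [hlow 0 le_rfl]
      · have hratio : m t / t ≤ m τ / τ := by
          rcases eq_or_lt_of_le hτ.2 with he | he
          · rw [he]
          · exact (hm_dec h' htmem he).le
        calc (m t / t) * τ ≤ (m τ / τ) * τ :=
              mul_le_mul_of_nonneg_right hratio h'.le
          _ = m τ := by field_simp
    have hcomp : (∫ τ in (0:ℝ)..t, (m t / t) * τ) ≤ ∫ τ in (0:ℝ)..t, m τ := by
      apply intervalIntegral.integral_mono_on ht _ hint hle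
      exact (IntervalIntegrable.const_mul intervalIntegral.intervalIntegrable_id _)
    have hval : (∫ τ in (0:ℝ)..t, (m t / t) * τ) = m t * t / 2 := by
      rw [intervalIntegral.integral_const_mul, integral_id]
      field_simp
      ring
    have hM2 : m t * t / 2 ≤ M t := by
      rw [hM t, ← hval]
      exact hcomp
    have hmt : m₀ ≤ m t := hlow t ht
    have hkey : (θ₀ - 4) / (4 * θ₀) = 1/4 - 1/θ₀ := by
      field_simp
    rw [hkey, ge_iff_le]
    have hu : 1/θ₀ < 1/4 := by
      rw [div_lt_div_iff₀ hθ0 (by norm_num)]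
      linarith
    have hu0 : 0 < 1/θ₀ := by positivity
    nlinarith [mul_nonneg (mul_nonneg (sub_nonneg.mpr hu.le) (sub_nonneg.mpr hmt)) ht]
end

section
/- Let m : [0,∞) → ℝ be continuous with m(t) > 0 for every t ≥ 0 and with t ↦ m(t)/t strictly decreasing on (0,∞), and let p > 4, S > 0, ζ > 0, α₀ > 0. Then the set 𝒞 := {C > 0 : p M(t² S²) − 2 C t^p ≤ p M(4π ζ²/α₀) for all t > 0} is nonempty; moreover its infimum C_p itself satisfies p M(t² S²) − 2 C_p t^p ≤ p M(4π ζ²/α₀) for all t > 0. -/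
open Real

theorem stmt_8 (m : ℝ → ℝ) (p S ζ α₀ : ℝ)
    (hm_cont : ContinuousOn m (Set.Ici 0))
    (hm_pos : ∀ t : ℝ, 0 ≤ t → 0 < m t)
    (hm_dec : StrictAntiOn (fun t => m t / t) (Set.Ioi (0 : ℝ)))
    (hp : 4 < p) (hS : 0 < S) (hζ : 0 < ζ) (hα₀ : 0 < α₀)
    (M : ℝ → ℝ)
    (hM : ∀ t : ℝ, M t = ∫ τ in (0:ℝ)..t, m τ) :
    {C : ℝ | 0 < C ∧ ∀ t : ℝ, 0 < t →
        p * M (t ^ 2 * S ^ 2) - 2 * C * t ^ p ≤ p * M (4 * π * ζ ^ 2 / α₀)}.Nonempty ∧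
    ∀ t : ℝ, 0 < t →
      p * M (t ^ 2 * S ^ 2)
        - 2 * sInf {C : ℝ | 0 < C ∧ ∀ t : ℝ, 0 < t →
            p * M (t ^ 2 * S ^ 2) - 2 * C * t ^ p ≤ p * M (4 * π * ζ ^ 2 / α₀)} * t ^ p
        ≤ p * M (4 * π * ζ ^ 2 / α₀) := by
  have hπ : (0:ℝ) < π := Real.pi_pos
  set K : ℝ := 4 * π * ζ ^ 2 / α₀ with hKdef
  have hKpos : 0 < K := by positivity
  have hp0 : (0:ℝ) < p := by linarith
  -- integrability of m on subintervals of [0,∞)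
  have hint : ∀ a b : ℝ, 0 ≤ a → 0 ≤ b → IntervalIntegrable m MeasureTheory.volume a b := by
    intro a b ha hb
    exact (hm_cont.mono (fun x hx => le_trans (le_min ha hb) hx.1)).intervalIntegrable
  -- monotonicity of M on [0,∞)
  have hMmono : ∀ a b : ℝ, 0 ≤ a → a ≤ b → M a ≤ M b := by
    intro a b ha hab
    have hb : 0 ≤ b := ha.trans hab
    have hadd : (∫ τ in (0:ℝ)..a, m τ) + ∫ τ in a..b, m τ = ∫ τ in (0:ℝ)..b, m τ :=
      intervalIntegral.integral_add_adjacent_intervals (hint 0 a le_rfl ha) (hint a b ha hb)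
    have hnn : 0 ≤ ∫ τ in a..b, m τ :=
      intervalIntegral.integral_nonneg hab (fun u hu => (hm_pos u (ha.trans hu.1)).le)
    rw [hM a, hM b, ← hadd]
    linarith
  have hmK : 0 < m K := hm_pos K hKpos.le
  -- linear bound on m for τ ≥ K
  have hlin : ∀ τ : ℝ, K ≤ τ → m τ ≤ m K / K * τ := by
    intro τ hτ
    rcases eq_or_lt_of_le hτ with h | h
    · rw [← h, div_mul_cancel₀ _ (ne_of_gt hKpos)]
    · have hτpos : 0 < τ := hKpos.trans h
      have := hm_dec (Set.mem_Ioi.mpr hKpos) (Set.mem_Ioi.mpr hτpos) h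
      simp only at this
      have := (div_lt_iff₀ hτpos).mp this
      linarith
  -- quadratic bound on M for x ≥ K
  have hMbound : ∀ x : ℝ, K ≤ x → M x ≤ M K + m K / (2 * K) * x ^ 2 := by
    intro x hx
    have hx0 : 0 ≤ x := hKpos.le.trans hx
    have hadd : (∫ τ in (0:ℝ)..K, m τ) + ∫ τ in K..x, m τ = ∫ τ in (0:ℝ)..x, m τ :=
      intervalIntegral.integral_add_adjacent_intervals (hint 0 K le_rfl hKpos.le) (hint K x hKpos.le hx0)
    have h2 : (∫ τ in K..x, m τ) ≤ ∫ τ in K..x, m K / K * τ := by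
      apply intervalIntegral.integral_mono_on hx (hint K x hKpos.le hx0)
      · exact (Continuous.intervalIntegrable (by continuity) K x)
      · exact fun u hu => hlin u hu.1
    have h3 : (∫ τ in K..x, m K / K * τ) = m K / K * ((x ^ 2 - K ^ 2) / 2) := by
      rw [intervalIntegral.integral_const_mul, integral_id]
    rw [hM x, hM K, ← hadd]
    have hKK : 0 ≤ m K / K * (K ^ 2 / 2) := by positivity
    have : m K / K * ((x ^ 2 - K ^ 2) / 2) ≤ m K / (2 * K) * x ^ 2 := by
      have e1 : m K / K * ((x ^ 2 - K ^ 2) / 2)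
          = m K / (2 * K) * x ^ 2 - m K / (2 * K) * K ^ 2 := by
        field_simp
      have e2 : 0 ≤ m K / (2 * K) * K ^ 2 := by positivity
      linarith
    linarith [h2, h3.le, h3.ge]
  -- the candidate constant
  set t₀ : ℝ := Real.sqrt K / S with ht₀def
  have ht₀pos : 0 < t₀ := by positivity
  have ht₀sq : t₀ ^ 2 * S ^ 2 = K := by
    rw [ht₀def, div_pow, div_mul_cancel₀ _ (by positivity), sq_sqrt hKpos.le]
  set B : ℝ := p * (m K / (2 * K)) * S ^ 4 with hBdef
  have hBpos : 0 < B := by positivity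
  set C : ℝ := B / (2 * t₀ ^ (p - 4)) with hCdef
  have hCpos : 0 < C := by positivity
  clear_value t₀ B C K
  have hkey : ∀ t : ℝ, 0 < t →
      p * M (t ^ 2 * S ^ 2) - 2 * C * t ^ p ≤ p * M K := by
    intro t ht
    have htp : 0 < t ^ p := rpow_pos_of_pos ht p
    rcases le_or_gt (t ^ 2 * S ^ 2) K with hcase | hcase
    · have h1 : M (t ^ 2 * S ^ 2) ≤ M K := hMmono _ _ (by positivity) hcase
      have h2 : p * M (t ^ 2 * S ^ 2) ≤ p * M K := mul_le_mul_of_nonneg_left h1 hp0.le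
      have h3 : 0 < 2 * C * t ^ p := by positivity
      linarith
    · -- t > t₀
      have ht0lt : t₀ < t := by
        have hsq : t₀ ^ 2 < t ^ 2 := by
          have : t₀ ^ 2 * S ^ 2 < t ^ 2 * S ^ 2 := by rw [ht₀sq]; exact hcase
          exact lt_of_mul_lt_mul_right this (by positivity)
        exact lt_of_pow_lt_pow_left₀ 2 ht.le hsq
      have hMb := hMbound (t ^ 2 * S ^ 2) hcase.le
      -- 2 C t^p ≥ B t^4
      have hrw : t ^ p = (t ^ 2) ^ 2 * t ^ (p - 4) := by
        have h4 : (t ^ 2) ^ 2 = t ^ ((4 : ℕ) : ℝ) := by rw [rpow_natCast]; ring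
        rw [h4, ← rpow_add ht]; norm_num
      have hmono : t₀ ^ (p - 4) ≤ t ^ (p - 4) :=
        rpow_le_rpow ht₀pos.le ht0lt.le (by linarith)
      have ht0p : 0 < t₀ ^ (p - 4) := rpow_pos_of_pos ht₀pos _
      have h2C : B * (t ^ 2) ^ 2 ≤ 2 * C * t ^ p := by
        rw [hCdef, hrw]
        have hone : (1 : ℝ) ≤ t ^ (p - 4) / t₀ ^ (p - 4) := (one_le_div ht0p).mpr hmono
        have hbt : 0 ≤ B * (t ^ 2) ^ 2 := by positivity
        have e : 2 * (B / (2 * t₀ ^ (p - 4))) * ((t ^ 2) ^ 2 * t ^ (p - 4))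
            = B * (t ^ 2) ^ 2 * (t ^ (p - 4) / t₀ ^ (p - 4)) := by
          field_simp
        rw [e]
        calc B * (t ^ 2) ^ 2 = B * (t ^ 2) ^ 2 * 1 := by ring
          _ ≤ B * (t ^ 2) ^ 2 * (t ^ (p - 4) / t₀ ^ (p - 4)) :=
              mul_le_mul_of_nonneg_left hone hbt
      have hexp : (t ^ 2 * S ^ 2) ^ 2 = (t ^ 2) ^ 2 * S ^ 4 := by ring
      have : p * M (t ^ 2 * S ^ 2) ≤ p * M K + B * (t ^ 2) ^ 2 := by
        have h6 := mul_le_mul_of_nonneg_left hMb hp0.le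
        rw [hexp] at h6
        have e2 : p * (M K + m K / (2 * K) * ((t ^ 2) ^ 2 * S ^ 4))
            = p * M K + B * (t ^ 2) ^ 2 := by rw [hBdef]; ring
        linarith
      linarith
  have hCmem : C ∈ {C : ℝ | 0 < C ∧ ∀ t : ℝ, 0 < t →
      p * M (t ^ 2 * S ^ 2) - 2 * C * t ^ p ≤ p * M K} :=
    ⟨hCpos, hkey⟩
  refine ⟨⟨C, hCmem⟩, ?_⟩
  intro t ht
  have htp : 0 < t ^ p := rpow_pos_of_pos ht p
  have hlb : (p * M (t ^ 2 * S ^ 2) - p * M K) / (2 * t ^ p) ≤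
      sInf {C : ℝ | 0 < C ∧ ∀ t : ℝ, 0 < t →
        p * M (t ^ 2 * S ^ 2) - 2 * C * t ^ p ≤ p * M K} := by
    apply le_csInf ⟨C, hCmem⟩
    intro b hb
    have hbt := hb.2 t ht
    rw [div_le_iff₀ (by positivity)]
    have e : b * (2 * t ^ p) = 2 * b * t ^ p := by ring
    linarith
  rw [div_le_iff₀ (by positivity)] at hlb
  set Q := sInf {C : ℝ | 0 < C ∧ ∀ t : ℝ, 0 < t →
      p * M (t ^ 2 * S ^ 2) - 2 * C * t ^ p ≤ p * M K} with hQ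
  have e : Q * (2 * t ^ p) = 2 * Q * t ^ p := by ring
  linarith
end

section
/- Let n ≥ 2 be an integer, R > 0, M_R ≥ 0, and let b : ℝ² → ℝ be measurable with |b(x)| ≤ M_R for almost every x in the ball B_R(0) = {x ∈ ℝ² : |x| < R}. Then ∫_{B_R(0)} b(x) G̃_n(x)² dx ≤ R² M_R/(4 log n). -/
open Real MeasureTheory

/-- The truncated Moser function `G̃ₙ` on `ℝ²`. -/
noncomputable def moserFun (n : ℕ) (R : ℝ) (x : EuclideanSpace ℝ (Fin 2)) : ℝ :=
  if ‖x‖ ≤ R / n then Real.sqrt (Real.log n) / Real.sqrt (2 * π)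
  else if ‖x‖ ≤ R then Real.log (R / ‖x‖) / (Real.sqrt (2 * π) * Real.sqrt (Real.log n))
  else 0

/-! Since `G̃ₙ` is radial, its square integrates in polar coordinates. With `a = R / n` and
`L = log n`, the profile is constant `L / (2π)` on `[0, a]` and `log (R / r) ^ 2 / (2πL)` on
`[a, R]`, and `r ^ 2 / 2 * log (R / r) ^ 2 + r ^ 2 / 2 * log (R / r) + r ^ 2 / 4` is an
antiderivative of `r * log (R / r) ^ 2`. This gives
`∫ G̃ₙ² = R ^ 2 / (4L) - a ^ 2 / 2 - a ^ 2 / (4L) ≤ R ^ 2 / (4L)`, and since `G̃ₙ` vanishes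
outside the ball, bounding `b` by `M_R` there finishes the proof. -/

open Set

theorem integral_comp_norm_euclideanSpace_fin_two (f : ℝ → ℝ) :
    ∫ x : EuclideanSpace ℝ (Fin 2), f ‖x‖ = 2 * π * ∫ r in Ioi (0 : ℝ), r * f r := by
  rw [integral_fun_norm_addHaar volume f, finrank_euclideanSpace_fin, measureReal_def,
    EuclideanSpace.volume_ball_fin_two]
  simp [mul_assoc, pi_nonneg]

theorem integral_mul_log_div_sq {a b : ℝ} (ha : 0 < a) (hb : 0 < b) :
    ∫ r in a..b, r * log (b / r) ^ 2
      = b ^ 2 / 4 - a ^ 2 / 2 * log (b / a) ^ 2 - a ^ 2 / 2 * log (b / a) - a ^ 2 / 4 := by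
  have hpos : ∀ r ∈ uIcc a b, 0 < r := fun r hr => (lt_min ha hb).trans_le hr.1
  have hderiv : ∀ r ∈ uIcc a b, HasDerivAt
      (fun r => r ^ 2 / 2 * log (b / r) ^ 2 + r ^ 2 / 2 * log (b / r) + r ^ 2 / 4)
      (r * log (b / r) ^ 2) r := by
    intro r hr
    have hr0 := (hpos r hr).ne'
    have hlog : HasDerivAt (fun r => log (b / r)) (-r⁻¹) r := by
      refine (((hasDerivAt_const r b).div (hasDerivAt_id r) hr0).log
        (div_ne_zero hb.ne' hr0)).congr_deriv ?_
      simp only [Pi.div_apply, id]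
      field_simp
      ring
    have hsq : HasDerivAt (fun r : ℝ => r ^ 2) (2 * r) r := by simpa using hasDerivAt_pow 2 r
    refine ((((hsq.div_const 2).mul (hlog.pow 2)).add ((hsq.div_const 2).mul hlog)).add
      (hsq.div_const 4)).congr_deriv ?_
    simp only [Pi.pow_apply]
    field_simp
    ring
  have hlog : ContinuousOn (fun r => log (b / r)) (uIcc a b) :=
    (continuousOn_const.div continuousOn_id fun r hr => (hpos r hr).ne').log
      fun r hr => (div_pos hb (hpos r hr)).ne'
  have hcont : ContinuousOn (fun r => r * log (b / r) ^ 2) (uIcc a b) :=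
    continuousOn_id.mul (hlog.pow 2)
  rw [intervalIntegral.integral_eq_sub_of_hasDerivAt hderiv hcont.intervalIntegrable,
    div_self hb.ne', log_one]
  ring

noncomputable def moserProfile (n : ℕ) (R r : ℝ) : ℝ :=
  if r ≤ R / n then √(log n) / √(2 * π)
  else if r ≤ R then log (R / r) / (√(2 * π) * √(log n))
  else 0

theorem moserFun_eq_moserProfile_norm (n : ℕ) (R : ℝ) (x : EuclideanSpace ℝ (Fin 2)) :
    moserFun n R x = moserProfile n R ‖x‖ :=
  rfl

theorem measurable_moserProfile (n : ℕ) (R : ℝ) : Measurable (moserProfile n R) := by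
  unfold moserProfile
  refine Measurable.ite measurableSet_Iic measurable_const
    (Measurable.ite measurableSet_Iic ?_ measurable_const)
  exact (measurable_log.comp (measurable_const.div measurable_id)).div_const _

section moserProfile

variable {n : ℕ} {R r : ℝ}

theorem moserProfile_sq_of_le (h : r ≤ R / n) : moserProfile n R r ^ 2 = log n / (2 * π) := by
  rw [moserProfile, if_pos h, div_pow, sq_sqrt (log_natCast_nonneg n), sq_sqrt (by positivity)]

theorem moserProfile_sq_of_lt_of_le (h₁ : R / n < r) (h₂ : r ≤ R) :
    moserProfile n R r ^ 2 = log (R / r) ^ 2 / (2 * π * log n) := by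
  rw [moserProfile, if_neg h₁.not_ge, if_pos h₂, div_pow, mul_pow, sq_sqrt (by positivity),
    sq_sqrt (log_natCast_nonneg n)]

theorem moserProfile_eq_zero_of_le (hR : 0 < R) (hn : 1 < n) (h : R ≤ r) :
    moserProfile n R r = 0 := by
  have hRn : R / n < R := div_lt_self hR (by exact_mod_cast hn)
  rw [moserProfile, if_neg (hRn.trans_le h).not_ge]
  rcases h.eq_or_lt with rfl | hlt
  · simp [div_self hR.ne']
  · rw [if_neg hlt.not_ge]

theorem moserProfile_sq_le (hR : 0 < R) (hn : 1 < n) :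
    moserProfile n R r ^ 2 ≤ log n / (2 * π) := by
  rcases le_or_gt r (R / n) with h₁ | h₁
  · exact (moserProfile_sq_of_le h₁).le
  rcases le_or_gt r R with h₂ | h₂
  · have hn' : (0 : ℝ) < n := by exact_mod_cast hn.pos
    have hL : 0 < log n := log_pos (by exact_mod_cast hn)
    have hr : 0 < r := (div_pos hR hn').trans h₁
    have hlog₀ : 0 ≤ log (R / r) := log_nonneg ((one_le_div hr).2 h₂)
    have hRn : R < n * r := by rw [div_lt_iff₀ hn'] at h₁; linarith
    have hlog : log (R / r) ≤ log n := log_le_log (div_pos hR hr) ((div_le_iff₀ hr).2 hRn.le)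
    rw [moserProfile_sq_of_lt_of_le h₁ h₂]
    rw [div_le_div_iff₀ (by positivity) (by positivity)]
    have := pow_le_pow_left₀ hlog₀ hlog 2
    nlinarith [pi_pos]
  · simp only [moserProfile, if_neg h₁.not_ge, if_neg h₂.not_ge, zero_pow two_ne_zero]
    positivity

theorem setIntegral_Ioi_mul_moserProfile_sq (hR : 0 < R) (hn : 1 < n) :
    ∫ r in Ioi 0, r * moserProfile n R r ^ 2
      = log n / (2 * π) * ((R / n) ^ 2 / 2)
        + (R ^ 2 / 4 - (R / n) ^ 2 / 2 * log n ^ 2 - (R / n) ^ 2 / 2 * log n - (R / n) ^ 2 / 4)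
          / (2 * π * log n) := by
  have hn' : (1 : ℝ) < n := by exact_mod_cast hn
  have ha : 0 < R / n := div_pos hR (by positivity)
  have haR : R / n < R := div_lt_self hR hn'
  have hint : IntegrableOn (fun r => r * moserProfile n R r ^ 2) (Ioc 0 R) := by
    refine Measure.integrableOn_of_bounded (M := R * (log n / (2 * π))) (by simp)
      (measurable_id.mul ((measurable_moserProfile n R).pow_const 2)).aestronglyMeasurable ?_
    refine (ae_restrict_mem measurableSet_Ioc).mono fun r hr => ?_
    rw [norm_mul, norm_of_nonneg hr.1.le, norm_of_nonneg (sq_nonneg _)]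
    exact mul_le_mul hr.2 (moserProfile_sq_le hR hn) (sq_nonneg _) hR.le
  calc ∫ r in Ioi 0, r * moserProfile n R r ^ 2
      = ∫ r in Ioc 0 R, r * moserProfile n R r ^ 2 :=
        setIntegral_eq_of_subset_of_forall_sdiff_eq_zero measurableSet_Ioi Ioc_subset_Ioi_self
          fun r hr => by
            rw [moserProfile_eq_zero_of_le hR hn (not_le.1 fun h => hr.2 ⟨hr.1, h⟩).le]
            ring
    _ = (∫ r in Ioc 0 (R / n), r * moserProfile n R r ^ 2)
          + ∫ r in Ioc (R / n) R, r * moserProfile n R r ^ 2 := by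
        rw [← Ioc_union_Ioc_eq_Ioc ha.le haR.le] at hint ⊢
        exact setIntegral_union (Ioc_disjoint_Ioc_of_le le_rfl) measurableSet_Ioc
          (hint.mono_set subset_union_left) (hint.mono_set subset_union_right)
    _ = (∫ r in Ioc 0 (R / n), r * (log n / (2 * π)))
          + ∫ r in Ioc (R / n) R, r * log (R / r) ^ 2 / (2 * π * log n) := by
        congr 1 <;> refine setIntegral_congr_fun measurableSet_Ioc fun r hr => ?_
        · rw [moserProfile_sq_of_le hr.2]
        · rw [moserProfile_sq_of_lt_of_le hr.1 hr.2, mul_div_assoc]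
    _ = _ := by
      rw [← intervalIntegral.integral_of_le ha.le, ← intervalIntegral.integral_of_le haR.le,
        intervalIntegral.integral_mul_const, integral_id, intervalIntegral.integral_div,
        integral_mul_log_div_sq ha hR, div_div_cancel₀ hR.ne']
      ring

end moserProfile

section moserFun

variable {n : ℕ} {R : ℝ}

theorem integral_moserFun_sq (hR : 0 < R) (hn : 1 < n) :
    ∫ x, moserFun n R x ^ 2
      = R ^ 2 / (4 * log n) - (R / n) ^ 2 / 2 - (R / n) ^ 2 / (4 * log n) := by
  have hL : 0 < log n := log_pos (by exact_mod_cast hn)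
  simp_rw [moserFun_eq_moserProfile_norm]
  rw [integral_comp_norm_euclideanSpace_fin_two (fun r => moserProfile n R r ^ 2),
    setIntegral_Ioi_mul_moserProfile_sq hR hn]
  field_simp
  ring

theorem setIntegral_ball_moserFun_sq_le (hR : 0 < R) (hn : 1 < n) :
    ∫ x in Metric.ball 0 R, moserFun n R x ^ 2 ≤ R ^ 2 / (4 * log n) := by
  have hL : 0 < log n := log_pos (by exact_mod_cast hn)
  rw [setIntegral_eq_integral_of_forall_compl_eq_zero fun x hx => ?_, integral_moserFun_sq hR hn]
  · have : 0 ≤ (R / n) ^ 2 / (4 * log n) := by positivity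
    nlinarith [sq_nonneg (R / n)]
  · rw [moserFun_eq_moserProfile_norm, moserProfile_eq_zero_of_le hR hn (by simpa using hx)]
    ring

end moserFun

theorem stmt_10 (n : ℕ) (R M_R : ℝ) (hn : 2 ≤ n) (hR : 0 < R) (hM : 0 ≤ M_R)
    (b : EuclideanSpace ℝ (Fin 2) → ℝ) (hb_meas : Measurable b)
    (hb_bdd : ∀ᵐ x ∂(volume.restrict (Metric.ball (0 : EuclideanSpace ℝ (Fin 2)) R)),
      |b x| ≤ M_R) :
    ∫ x in Metric.ball (0 : EuclideanSpace ℝ (Fin 2)) R, b x * (moserFun n R x) ^ 2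
      ≤ R ^ 2 * M_R / (4 * Real.log n) := by
  have hG : IntegrableOn (fun x => moserFun n R x ^ 2) (Metric.ball 0 R) :=
    Measure.integrableOn_of_bounded measure_ball_lt_top.ne
      (((measurable_moserProfile n R).comp measurable_norm).pow_const 2).aestronglyMeasurable
      (ae_of_all _ fun x => (norm_of_nonneg (sq_nonneg _)).trans_le
        (moserProfile_sq_le hR (by omega)))
  calc ∫ x in Metric.ball 0 R, b x * moserFun n R x ^ 2
      ≤ ∫ x in Metric.ball 0 R, M_R * moserFun n R x ^ 2 :=
        integral_mono_ae (hG.bdd_mul hb_meas.aestronglyMeasurable hb_bdd) (hG.const_mul M_R)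
          (hb_bdd.mono fun x hx => mul_le_mul_of_nonneg_right ((le_abs_self _).trans hx)
            (sq_nonneg _))
    _ = M_R * ∫ x in Metric.ball 0 R, moserFun n R x ^ 2 := integral_const_mul _ _
    _ ≤ M_R * (R ^ 2 / (4 * log n)) :=
        mul_le_mul_of_nonneg_left (setIntegral_ball_moserFun_sq_le hR (by omega)) hM
    _ = R ^ 2 * M_R / (4 * log n) := by ring
end

section
/- Define b : ℝ² → ℝ by b(x₁, x₂) = |x₁ x₂|. Then for every K > 0, every r > 0 and every sequence (x_n) ⊂ ℝ² with |x_n| → ∞, the Lebesgue measure of the set {y ∈ ℝ² : |y₁ y₂| < K} ∩ B_r(x_n) tends to 0 as n → ∞, where B_r(x_n) = {y ∈ ℝ² : |y − x_n| < r}. -/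
open MeasureTheory Filter

/-!
Every centre `c` has a coordinate with `|c i| ≥ ‖c‖ / 2`. On the ball `B_r(c)` this gives
`|y i| > ‖c‖ / 2 - r`, so `|y₀ y₁| < K` confines the other coordinate to an interval of length
`2K / (‖c‖ / 2 - r)`. The set thus lies in a rectangle of area `4rK / (‖c‖ / 2 - r)`, which tends to
`0` as `‖c‖ → ∞`.
-/

theorem OrthonormalBasis.norm_le_sum_norm_repr {ι 𝕜 E : Type*} [Fintype ι] [RCLike 𝕜]
    [NormedAddCommGroup E] [InnerProductSpace 𝕜 E] (b : OrthonormalBasis ι 𝕜 E) (x : E) :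
    ‖x‖ ≤ ∑ i, ‖b.repr x i‖ := by
  conv_lhs => rw [← b.sum_repr x]
  refine (norm_sum_le _ _).trans_eq (Finset.sum_congr rfl fun i _ => ?_)
  rw [norm_smul, b.norm_eq_one, mul_one]

theorem EuclideanSpace.exists_norm_le_two_mul_abs_apply (x : EuclideanSpace ℝ (Fin 2)) :
    ∃ i, ‖x‖ ≤ 2 * |x i| := by
  have h := (EuclideanSpace.basisFun (Fin 2) ℝ).norm_le_sum_norm_repr x
  simp only [EuclideanSpace.basisFun_repr, Fin.sum_univ_two, Real.norm_eq_abs] at h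
  rcases le_total |x 0| |x 1| with h01 | h10
  · exact ⟨1, by linarith⟩
  · exact ⟨0, by linarith⟩

theorem EuclideanSpace.volume_setOf_forall_mem {ι : Type*} [Fintype ι] (s : ι → Set ℝ) :
    volume {y : EuclideanSpace ℝ ι | ∀ i, y i ∈ s i} = ∏ i, volume (s i) := by
  rw [← volume_pi_pi,
    ← (EuclideanSpace.volume_preserving_symm_measurableEquiv_toLp ι).measure_preimage_equiv]
  congr 1
  ext y
  simp [Set.mem_pi]

theorem abs_lt_div_of_abs_mul_lt {s t a r K : ℝ} (hst : |s * t| < K) (ht : |t - a| < r)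
    (hra : r < |a|) : |s| < K / (|a| - r) := by
  have hta : |a| - r < |t| := by linarith [abs_sub_abs_le_abs_sub a t, abs_sub_comm t a]
  rw [lt_div_iff₀ (sub_pos.2 hra)]
  calc |s| * (|a| - r) ≤ |s| * |t| := mul_le_mul_of_nonneg_left hta.le (abs_nonneg s)
    _ = |s * t| := (abs_mul s t).symm
    _ < K := hst

theorem abs_apply_mul_apply_of_ne {x : EuclideanSpace ℝ (Fin 2)} {i j : Fin 2} (h : j ≠ i) :
    |x j * x i| = |x 0 * x 1| := by
  fin_cases i <;> fin_cases j <;> simp_all [mul_comm]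

theorem volume_setOf_abs_mul_lt_inter_ball_le {K r : ℝ} (hr : 0 ≤ r)
    (c : EuclideanSpace ℝ (Fin 2)) (i : Fin 2) (hi : r < |c i|) :
    volume ({y : EuclideanSpace ℝ (Fin 2) | |y 0 * y 1| < K} ∩ Metric.ball c r) ≤
      ENNReal.ofReal (4 * r * K / (|c i| - r)) := by
  set ε := K / (|c i| - r) with hε
  let box : Fin 2 → Set ℝ := fun k =>
    if k = i then Set.Ioo (c i - r) (c i + r) else Set.Ioo (-ε) ε
  have hsub : {y : EuclideanSpace ℝ (Fin 2) | |y 0 * y 1| < K} ∩ Metric.ball c r ⊆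
      {y | ∀ k, y k ∈ box k} := by
    rintro y ⟨hyK, hyc⟩ k
    have hyi : |y i - c i| < r := (PiLp.dist_apply_le y c i).trans_lt hyc
    by_cases hk : k = i
    · subst hk
      simp only [box, if_true, Set.mem_Ioo]
      constructor <;> linarith [abs_sub_lt_iff.1 hyi]
    · simp only [box, hk, if_false, Set.mem_Ioo, ← abs_lt]
      exact abs_lt_div_of_abs_mul_lt ((abs_apply_mul_apply_of_ne hk).trans_lt hyK) hyi hi
  calc _ ≤ _ := measure_mono hsub
    _ = ENNReal.ofReal (2 * r) * ENNReal.ofReal (2 * ε) := by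
      rw [EuclideanSpace.volume_setOf_forall_mem]
      fin_cases i <;> simp [box, Fin.prod_univ_two, ← two_mul, mul_comm]
    _ = _ := by
      rw [← ENNReal.ofReal_mul (by positivity), hε]
      congr 1
      ring

theorem volume_setOf_abs_mul_lt_inter_ball_le_of_norm {K r : ℝ} (hK : 0 ≤ K) (hr : 0 ≤ r)
    (c : EuclideanSpace ℝ (Fin 2)) (hc : 2 * r < ‖c‖) :
    volume ({y : EuclideanSpace ℝ (Fin 2) | |y 0 * y 1| < K} ∩ Metric.ball c r) ≤
      ENNReal.ofReal (4 * r * K / (‖c‖ / 2 - r)) := by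
  obtain ⟨i, hi⟩ := c.exists_norm_le_two_mul_abs_apply
  refine (volume_setOf_abs_mul_lt_inter_ball_le hr c i (by linarith)).trans
    (ENNReal.ofReal_le_ofReal ?_)
  exact div_le_div_of_nonneg_left (by positivity) (by linarith) (by linarith)

theorem stmt_14 (K r : ℝ) (hK : 0 < K) (hr : 0 < r)
    (xs : ℕ → EuclideanSpace ℝ (Fin 2))
    (hxs : Tendsto (fun n => ‖xs n‖) atTop atTop) :
    Tendsto (fun n =>
        volume ({y : EuclideanSpace ℝ (Fin 2) | |y 0 * y 1| < K} ∩ Metric.ball (xs n) r))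
      atTop (nhds 0) := by
  have hbound :
      Tendsto (fun n => ENNReal.ofReal (4 * r * K / (‖xs n‖ / 2 - r))) atTop (nhds 0) := by
    have hden := tendsto_atTop_add_const_right atTop (-r) (hxs.atTop_div_const two_pos)
    simpa [sub_eq_add_neg] using ENNReal.tendsto_ofReal (tendsto_const_nhds.div_atTop hden)
  refine tendsto_of_tendsto_of_tendsto_of_le_of_le' tendsto_const_nhds hbound
    (Eventually.of_forall fun _ => zero_le) ?_
  filter_upwards [hxs.eventually_gt_atTop (2 * r)] with n hn
  exact volume_setOf_abs_mul_lt_inter_ball_le_of_norm hK.le hr.le (xs n) hn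
end

section
/- Let θ > 4 and define f : ℝ → ℝ by f(s) = s^{θ−1}(e^{s²} − 1) + (2/θ) s^{θ+1} e^{s²} for s > 0 and f(s) = 0 for s ≤ 0. Then: (i) F(s) = (s^θ/θ)(e^{s²} − 1) for every s ≥ 0; (ii) θ F(s) ≤ s f(s) for every s > 0; (iii) the map s ↦ f(s)/s³ is positive and nondecreasing on (0,∞). -/
/-! For `s > 0` the formula for `f` is the derivative of `G(s) = (s^θ/θ)(e^{s²} - 1)`, and `G(0) = 0`,
so the fundamental theorem of calculus gives (i). Then `s f(s) = θ G(s) + (2/θ) s^{θ+2} e^{s²}`, which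
gives (ii), and `f(s)/s³ = s^{θ-4}(e^{s²} - 1) + (2/θ) s^{θ-2} e^{s²}` is a sum of products of
nonnegative nondecreasing functions once `θ ≥ 4`, which gives (iii). -/

open Real Set

noncomputable section

def expNonlinearity (θ s : ℝ) : ℝ :=
  s ^ (θ - 1) * (exp (s ^ 2) - 1) + 2 / θ * s ^ (θ + 1) * exp (s ^ 2)

def expPrimitive (θ s : ℝ) : ℝ := s ^ θ / θ * (exp (s ^ 2) - 1)

variable {θ : ℝ}

theorem continuous_expNonlinearity (hθ : 1 ≤ θ) : Continuous (expNonlinearity θ) := by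
  unfold expNonlinearity
  fun_prop (disch := linarith)

theorem continuous_expPrimitive (hθ : 0 ≤ θ) : Continuous (expPrimitive θ) := by
  unfold expPrimitive
  fun_prop (disch := assumption)

theorem expPrimitive_zero : expPrimitive θ 0 = 0 := by
  simp [expPrimitive]

theorem expNonlinearity_zero (hθ : θ + 1 ≠ 0) : expNonlinearity θ 0 = 0 := by
  simp [expNonlinearity, zero_rpow hθ]

theorem hasDerivAt_expPrimitive (hθ : θ ≠ 0) {s : ℝ} (hs : 0 < s) :
    HasDerivAt (expPrimitive θ) (expNonlinearity θ s) s := by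
  have hpow : HasDerivAt (fun x : ℝ => x ^ θ) (θ * s ^ (θ - 1)) s :=
    hasDerivAt_rpow_const (Or.inl hs.ne')
  have hexp : HasDerivAt (fun x : ℝ => exp (x ^ 2)) (exp (s ^ 2) * (2 * s)) s := by
    simpa using (hasDerivAt_pow 2 s).exp
  refine ((hpow.div_const θ).mul (hexp.sub_const 1)).congr_deriv ?_
  rw [expNonlinearity, rpow_add hs, rpow_one]
  field_simp

theorem integral_expNonlinearity (hθ : 1 ≤ θ) {s : ℝ} (hs : 0 ≤ s) :
    ∫ τ in (0 : ℝ)..s, expNonlinearity θ τ = expPrimitive θ s := by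
  rw [intervalIntegral.integral_eq_sub_of_hasDerivAt_of_le hs
      (continuous_expPrimitive (by linarith)).continuousOn
      (fun x hx => hasDerivAt_expPrimitive (by linarith) hx.1)
      ((continuous_expNonlinearity hθ).intervalIntegrable _ _),
    expPrimitive_zero, sub_zero]

theorem mul_expPrimitive_le (hθ : 0 < θ) {s : ℝ} (hs : 0 < s) :
    θ * expPrimitive θ s ≤ s * expNonlinearity θ s := by
  have hsplit : s * expNonlinearity θ s =
      θ * expPrimitive θ s + 2 / θ * s ^ (θ + 2) * exp (s ^ 2) := by
    have h1 : s ^ θ = s * s ^ (θ - 1) := by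
      rw [← rpow_one_add' hs.le (by linarith)]; ring_nf
    have h2 : s ^ (θ + 2) = s * s ^ (θ + 1) := by
      rw [← rpow_one_add' hs.le (by linarith)]; ring_nf
    rw [expNonlinearity, expPrimitive, h1, h2]
    field_simp
  rw [hsplit]
  have : 0 ≤ 2 / θ * s ^ (θ + 2) * exp (s ^ 2) := by positivity
  linarith

theorem expNonlinearity_div_cube {s : ℝ} (hs : 0 < s) :
    expNonlinearity θ s / s ^ 3 =
      s ^ (θ - 4) * (exp (s ^ 2) - 1) + 2 / θ * s ^ (θ - 2) * exp (s ^ 2) := by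
  have hcube : (s ^ 3 : ℝ) = s ^ (3 : ℝ) := (rpow_natCast s 3).symm
  have h1 : s ^ (θ - 1) = s ^ (θ - 4) * s ^ 3 := by
    rw [hcube, ← rpow_add hs]; ring_nf
  have h2 : s ^ (θ + 1) = s ^ (θ - 2) * s ^ 3 := by
    rw [hcube, ← rpow_add hs]; ring_nf
  rw [expNonlinearity, h1, h2]
  field_simp

theorem expNonlinearity_div_cube_pos (hθ : 0 ≤ θ) {s : ℝ} (hs : 0 < s) :
    0 < expNonlinearity θ s / s ^ 3 := by
  have : 0 < exp (s ^ 2) - 1 := sub_pos.2 (one_lt_exp_iff.2 (by positivity))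
  rw [expNonlinearity_div_cube hs]
  positivity

theorem monotoneOn_expNonlinearity_div_cube (hθ : 4 ≤ θ) :
    MonotoneOn (fun s => expNonlinearity θ s / s ^ 3) (Ioi 0) := by
  intro x (hx : 0 < x) y (hy : 0 < y) hxy
  simp only [expNonlinearity_div_cube hx, expNonlinearity_div_cube hy]
  have hexp : exp (x ^ 2) ≤ exp (y ^ 2) := exp_le_exp.2 (by gcongr)
  have : 0 ≤ exp (x ^ 2) - 1 := sub_nonneg.2 (one_le_exp (by positivity))
  gcongr
  linarith

end

theorem stmt_16 (θ : ℝ) (hθ : 4 < θ)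
    (f F : ℝ → ℝ)
    (hf : ∀ s : ℝ, f s = if 0 < s then
        s ^ (θ - 1) * (Real.exp (s ^ 2) - 1) + (2 / θ) * s ^ (θ + 1) * Real.exp (s ^ 2)
      else 0)
    (hF : ∀ s : ℝ, F s = ∫ τ in (0:ℝ)..s, f τ) :
    (∀ s : ℝ, 0 ≤ s → F s = s ^ θ / θ * (Real.exp (s ^ 2) - 1)) ∧
    (∀ s : ℝ, 0 < s → θ * F s ≤ s * f s) ∧
    (∀ s : ℝ, 0 < s → 0 < f s / s ^ 3) ∧
    MonotoneOn (fun s => f s / s ^ 3) (Set.Ioi (0 : ℝ)) := by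
  have hθ0 : 0 < θ := by linarith
  have hf_pos : ∀ s, 0 < s → f s = expNonlinearity θ s := fun s hs => by
    rw [hf, if_pos hs, expNonlinearity]
  have hf_nonneg : ∀ s, 0 ≤ s → f s = expNonlinearity θ s := fun s hs => by
    rcases hs.eq_or_lt with rfl | hs
    · rw [hf, if_neg (lt_irrefl 0), expNonlinearity_zero (by linarith)]
    · exact hf_pos s hs
  have hF_eq : ∀ s, 0 ≤ s → F s = expPrimitive θ s := fun s hs => by
    rw [hF, ← integral_expNonlinearity (by linarith) hs]
    refine intervalIntegral.integral_congr fun x hx => hf_nonneg x ?_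
    rw [uIcc_of_le hs] at hx
    exact hx.1
  refine ⟨hF_eq, fun s hs => ?_, fun s hs => ?_, ?_⟩
  · rw [hF_eq s hs.le, hf_pos s hs]
    exact mul_expPrimitive_le hθ0 hs
  · rw [hf_pos s hs]
    exact expNonlinearity_div_cube_pos hθ0.le hs
  · refine (monotoneOn_expNonlinearity_div_cube hθ.le).congr fun s (hs : 0 < s) => ?_
    simp only [hf_pos s hs]
end
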